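/- arXiv:2503.00896 — 2 statements merged into one kernel-verified Lean document; each statement's English description precedes it below -/
import Mathlib

section
/- The number of (t, t+1)-core partitions with distinct parts equals the Fibonacci number F_{t+1}, where F_1 = F_2 = 1 and F_{n} = F_{n-1} + F_{n-2}. -/
/-- An integer partition, given by its (weakly decreasing, eventually zero)
sequence of parts, indexed from `0`. -/
structure IntPartition where
  parts : ℕ → ℕ
  antitone : ∀ i j, i ≤ j → parts j ≤ parts i
  finite : ∃ N, ∀ i, N ≤ i → parts i = 0

namespace IntPartition

/-- The size of a partition: the sum of its parts. -/
noncomputable def size (lam : IntPartition) : ℕ := ∑ᶠ i, lam.parts i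

/-- The parts of the conjugate partition: `conjParts lam j` is the number of
rows `i` with `lam.parts i > j` (rows and columns are `0`-indexed). -/
noncomputable def conjParts (lam : IntPartition) (j : ℕ) : ℕ :=
  Nat.card {i : ℕ | j < lam.parts i}

/-- A partition is self-conjugate if it equals its conjugate. -/
def IsSelfConjugate (lam : IntPartition) : Prop :=
  ∀ j, lam.conjParts j = lam.parts j

/-- `(i, j)` (both `0`-indexed) is a cell of the Young diagram of `lam`. -/
def IsCell (lam : IntPartition) (i j : ℕ) : Prop := j < lam.parts i

/-- The hook length of the cell `(i, j)` (both `0`-indexed): the number of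
cells directly to the right, plus the number directly below, plus one. -/
noncomputable def hook (lam : IntPartition) (i j : ℕ) : ℕ :=
  (lam.parts i - j) + (lam.conjParts j - i) - 1

/-- A partition is a `t`-core if no hook length is divisible by `t`. -/
def IsCore (lam : IntPartition) (t : ℕ) : Prop :=
  ∀ i j, lam.IsCell i j → ¬ (t ∣ lam.hook i j)

/-- The size of the Durfee square: the largest `k` such that the partition has
at least `k` parts of size at least `k`. -/
noncomputable def durfee (lam : IntPartition) : ℕ :=
  Nat.card {i : ℕ | i < lam.parts i}

/-- A partition has distinct parts if its (nonzero) parts are pairwise different. -/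
def DistinctParts (lam : IntPartition) : Prop :=
  ∀ i j, lam.parts i ≠ 0 → lam.parts j ≠ 0 → i ≠ j → lam.parts i ≠ lam.parts j

/-- The set of main diagonal hook lengths of `lam`. -/
noncomputable def MD (lam : IntPartition) : Set ℕ :=
  {h | ∃ i < lam.durfee, lam.hook i i = h}

/-- `lam ∈ DS(t)`: `lam` is a self-conjugate `(t, t+1)`-core partition whose
first `durfee lam` parts are pairwise distinct. -/
def InDS (lam : IntPartition) (t : ℕ) : Prop :=
  lam.IsSelfConjugate ∧ lam.IsCore t ∧ lam.IsCore (t + 1) ∧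
    ∀ i j, i < lam.durfee → j < lam.durfee → i ≠ j → lam.parts i ≠ lam.parts j

end IntPartition

/-!
For a partition with distinct parts, largest part `λ₁ = parts 0` and length `ℓ = conjParts 0`,
the hook lengths along the first row fall from the corner hook `λ₁ + ℓ - 1` to `1` in steps of
one or two, so they hit `t` or `t + 1` as soon as the corner hook is at least `t`. As the
corner hook bounds every hook, such a partition is a `(t, t + 1)`-core exactly when
`λ₁ + ℓ ≤ t`. Distinct-part partitions are finite sets `S` of
positive integers, and the condition reads `max S + |S| ≤ t`; the sets with `|S| = k` are the
`k`-subsets of `{1, …, t - k}`, whence the count `∑ₖ C(t - k, k) = F_{t+1}`.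
-/

theorem Nat.exists_eq_or_eq_succ_of_le_add_two {f : ℕ → ℕ} {m n : ℕ}
    (hstep : ∀ j < m, f j ≤ f (j + 1) + 2) (h0 : n ≤ f 0) (hm : f m ≤ n + 1) :
    ∃ j ≤ m, f j = n ∨ f j = n + 1 := by
  induction m with
  | zero => exact ⟨0, le_rfl, by omega⟩
  | succ m ih =>
    by_cases hfm : f m ≤ n + 1
    · obtain ⟨j, hj, hfj⟩ := ih (fun j hj => hstep j (by omega)) hfm
      exact ⟨j, by omega, hfj⟩
    · have := hstep m (by omega)
      exact ⟨m + 1, le_rfl, by omega⟩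

open Finset in
theorem Finset.card_pos_add_card_le_eq_fib (t : ℕ) :
    Nat.card {S : Finset ℕ // 0 ∉ S ∧ ∀ x ∈ S, x + #S ≤ t} = Nat.fib (t + 1) := by
  have hmem (S : Finset ℕ) : (0 ∉ S ∧ ∀ x ∈ S, x + #S ≤ t) ↔
      S ∈ (range (t + 1)).biUnion fun k => powersetCard k (Icc 1 (t - k)) := by
    simp only [mem_biUnion, mem_range, mem_powersetCard]
    constructor
    · rintro ⟨h0, hS⟩
      have hsub : S ⊆ Icc 1 (t - #S) := fun x hx => by
        have := hS x hx
        have : x ≠ 0 := fun h => h0 (h ▸ hx)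
        rw [mem_Icc]
        omega
      have := card_le_card hsub
      rw [Nat.card_Icc] at this
      exact ⟨#S, by omega, hsub, rfl⟩
    · rintro ⟨k, hk, hS, rfl⟩
      exact ⟨fun h => by simpa using hS h, fun x hx => by have := mem_Icc.1 (hS hx); omega⟩
  have hdisj : (range (t + 1) : Set ℕ).PairwiseDisjoint
      fun k => powersetCard k (Icc 1 (t - k)) := fun i _ j _ hij =>
    disjoint_left.2 fun _ hi hj =>
      hij ((mem_powersetCard.1 hi).2.symm.trans (mem_powersetCard.1 hj).2)
  rw [Nat.card_congr (Equiv.subtypeEquivRight hmem), Nat.card_eq_fintype_card, Fintype.card_coe,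
    card_biUnion hdisj, Nat.fib_succ_eq_sum_choose, ← Nat.sum_antidiagonal_swap]
  simp only [Prod.fst_swap, Prod.snd_swap, Nat.sum_antidiagonal_eq_sum_range_succ
    (fun i j => Nat.choose j i), card_powersetCard, Nat.card_Icc, Nat.add_sub_cancel]

namespace IntPartition

variable (lam : IntPartition)

@[ext] theorem ext {lam mu : IntPartition} (h : lam.parts = mu.parts) : lam = mu := by
  cases lam; cases mu; simp_all

theorem lt_conjParts_iff {i j : ℕ} : i < lam.conjParts j ↔ j < lam.parts i := by
  obtain ⟨N, hN⟩ := lam.finite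
  have hex : ∃ n, lam.parts n ≤ j := ⟨N, by simp [hN N le_rfl]⟩
  have hrows : {i : ℕ | j < lam.parts i} = Set.Iio (Nat.find hex) := by
    ext k
    simp only [Set.mem_ofPred_eq, Set.mem_Iio, Nat.lt_find_iff, not_le]
    exact ⟨fun hk m hm => hk.trans_le (lam.antitone m k hm), fun h => h k le_rfl⟩
  have hcard : Nat.card (Set.Iio (Nat.find hex)) = Nat.find hex := by simp
  rw [conjParts, hrows, hcard, Nat.lt_find_iff]
  simp only [not_le]
  exact ⟨fun h => h i le_rfl, fun h m hm => h.trans_le (lam.antitone m i hm)⟩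

theorem conjParts_le_iff {i j : ℕ} : lam.conjParts j ≤ i ↔ lam.parts i ≤ j := by
  rw [← not_lt, lt_conjParts_iff, not_lt]

theorem conjParts_antitone : Antitone lam.conjParts := by
  intro j j' hjj'
  refine le_of_forall_lt fun i hi => ?_
  rw [lt_conjParts_iff] at hi ⊢
  exact hjj'.trans_lt hi

theorem hook_add_add_add_one {i j : ℕ} (hij : lam.IsCell i j) :
    lam.hook i j + i + j + 1 = lam.parts i + lam.conjParts j := by
  have : i < lam.conjParts j := lam.lt_conjParts_iff.2 hij
  unfold hook IsCell at *
  omega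

theorem isCore_of_parts_zero_add_conjParts_zero_le {s : ℕ}
    (h : lam.parts 0 + lam.conjParts 0 ≤ s) : lam.IsCore s := by
  intro i j hij hdvd
  have hrow := lam.antitone 0 i (Nat.zero_le i)
  have hcol := lam.conjParts_antitone (Nat.zero_le j)
  have hi : i < lam.conjParts j := lam.lt_conjParts_iff.2 hij
  have := lam.hook_add_add_add_one hij
  have := Nat.le_of_dvd (by unfold IsCell at hij; omega) hdvd
  omega

variable {lam}

theorem DistinctParts.conjParts_le_conjParts_succ_add_one (hd : lam.DistinctParts) (j : ℕ) :
    lam.conjParts j ≤ lam.conjParts (j + 1) + 1 := by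
  by_contra! h
  set a := lam.conjParts (j + 1)
  have h1 : j < lam.parts a := lam.lt_conjParts_iff.1 (by omega)
  have h2 : j < lam.parts (a + 1) := lam.lt_conjParts_iff.1 (by omega)
  have h3 : lam.parts a ≤ j + 1 := lam.conjParts_le_iff.1 le_rfl
  have h4 : lam.parts (a + 1) ≤ j + 1 := lam.conjParts_le_iff.1 (by omega)
  exact hd a (a + 1) (by omega) (by omega) (by omega) (by omega)

theorem DistinctParts.hook_zero_le_hook_zero_succ_add_two (hd : lam.DistinctParts) {j : ℕ}
    (hj : j + 1 < lam.parts 0) : lam.hook 0 j ≤ lam.hook 0 (j + 1) + 2 := by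
  have := lam.hook_add_add_add_one (show lam.IsCell 0 j by unfold IsCell; omega)
  have := lam.hook_add_add_add_one (show lam.IsCell 0 (j + 1) from hj)
  have := hd.conjParts_le_conjParts_succ_add_one j
  omega

theorem DistinctParts.hook_zero_parts_zero_sub_one (hd : lam.DistinctParts) (hp : 0 < lam.parts 0) :
    lam.hook 0 (lam.parts 0 - 1) = 1 := by
  have hcell : lam.IsCell 0 (lam.parts 0 - 1) := by unfold IsCell; omega
  have hlen : lam.conjParts (lam.parts 0 - 1) ≤ 1 := by
    rw [conjParts_le_iff]
    have := lam.antitone 0 1 zero_le_one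
    have := hd 0 1
    omega
  have := lam.lt_conjParts_iff.2 hcell
  have := lam.hook_add_add_add_one hcell
  omega

theorem DistinctParts.parts_zero_add_conjParts_zero_le (hd : lam.DistinctParts) {t : ℕ}
    (ht : lam.IsCore t) (ht' : lam.IsCore (t + 1)) : lam.parts 0 + lam.conjParts 0 ≤ t := by
  by_contra! h
  have hp : 0 < lam.parts 0 := by
    by_contra! hp
    have := lam.conjParts_le_iff.2 hp
    omega
  have hcorner := lam.hook_add_add_add_one (show lam.IsCell 0 0 from hp)
  -- the first-row hooks descend from the corner hook `≥ t` to `1` in steps of at most two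
  obtain ⟨j, hj, hhook⟩ := Nat.exists_eq_or_eq_succ_of_le_add_two (f := lam.hook 0)
    (m := lam.parts 0 - 1) (n := t)
    (fun j hj => hd.hook_zero_le_hook_zero_succ_add_two (by omega)) (by omega)
    (by rw [hd.hook_zero_parts_zero_sub_one hp]; omega)
  have hcell : lam.IsCell 0 j := by unfold IsCell; omega
  rcases hhook with hhook | hhook
  · exact ht 0 j hcell (by rw [hhook])
  · exact ht' 0 j hcell (by rw [hhook])

theorem DistinctParts.isCore_and_isCore_succ_iff (hd : lam.DistinctParts) (t : ℕ) :
    lam.IsCore t ∧ lam.IsCore (t + 1) ↔ lam.parts 0 + lam.conjParts 0 ≤ t :=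
  ⟨fun h => hd.parts_zero_add_conjParts_zero_le h.1 h.2, fun h =>
    ⟨lam.isCore_of_parts_zero_add_conjParts_zero_le h,
      lam.isCore_of_parts_zero_add_conjParts_zero_le (by omega)⟩⟩

def ofList (l : List ℕ) (hl : l.SortedGT) : IntPartition where
  parts i := l.getD i 0
  antitone i j hij := by
    rcases lt_or_ge j l.length with hj | hj
    · rw [List.getD_eq_getElem _ _ hj, List.getD_eq_getElem _ _ (by omega)]
      exact hl.sortedGE.getElem_ge_getElem_of_le hij
    · rw [List.getD_eq_default _ _ hj]
      exact Nat.zero_le _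
  finite := ⟨l.length, fun _ hi => List.getD_eq_default _ _ hi⟩

theorem ofList_parts (l : List ℕ) (hl : l.SortedGT) (i : ℕ) :
    (ofList l hl).parts i = l.getD i 0 := rfl

theorem conjParts_ofList_zero {l : List ℕ} (hl : l.SortedGT) (h0 : 0 ∉ l) :
    (ofList l hl).conjParts 0 = l.length := by
  refine eq_of_forall_lt_iff fun i => ?_
  rw [lt_conjParts_iff, ofList_parts]
  rcases lt_or_ge i l.length with hi | hi
  · rw [List.getD_eq_getElem _ _ hi, Nat.pos_iff_ne_zero]
    exact iff_of_true (fun h => h0 (h ▸ List.getElem_mem hi)) hi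
  · rw [List.getD_eq_default _ _ hi]
    exact iff_of_false (lt_irrefl 0) (by omega)

theorem distinctParts_ofList {l : List ℕ} (hl : l.SortedGT) : (ofList l hl).DistinctParts := by
  have hlt {k : ℕ} (hk : l.getD k 0 ≠ 0) : k < l.length := by
    by_contra! h
    exact hk (List.getD_eq_default _ _ h)
  intro i j (hi : l.getD i 0 ≠ 0) (hj : l.getD j 0 ≠ 0) hij
  rw [ofList_parts, ofList_parts, List.getD_eq_getElem _ _ (hlt hi),
    List.getD_eq_getElem _ _ (hlt hj), Ne, hl.nodup.getElem_inj_iff]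
  exact hij

noncomputable def toList (lam : IntPartition) : List ℕ :=
  (List.range (lam.conjParts 0)).map lam.parts

theorem length_toList : lam.toList.length = lam.conjParts 0 := by
  simp [toList]

theorem getD_toList (i : ℕ) : lam.toList.getD i 0 = lam.parts i := by
  rcases lt_or_ge i (lam.conjParts 0) with hi | hi
  · simp [toList, hi]
  · rw [List.getD_eq_default _ _ (length_toList ▸ hi)]
    exact (lam.conjParts_le_iff.1 hi).antisymm (Nat.zero_le _) |>.symm

theorem zero_notMem_toList : 0 ∉ lam.toList := by
  simp [toList, lt_conjParts_iff, Nat.pos_iff_ne_zero]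

theorem DistinctParts.sortedGT_toList (hd : lam.DistinctParts) : lam.toList.SortedGT := by
  refine List.sortedGT_of_getElem_gt_getElem_of_lt fun i j hi hj hji => ?_
  simp only [length_toList, lt_conjParts_iff] at hi hj
  simp only [toList, List.getElem_map, List.getElem_range]
  exact (lam.antitone j i hji.le).lt_of_ne (hd i j (by omega) (by omega) hji.ne')

theorem ofList_toList (hl : lam.toList.SortedGT) : ofList lam.toList hl = lam := by
  ext i
  exact getD_toList i

theorem toList_ofList {l : List ℕ} (hl : l.SortedGT) (h0 : 0 ∉ l) :
    (ofList l hl).toList = l := by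
  refine List.ext_getElem (by rw [length_toList, conjParts_ofList_zero hl h0]) fun i hi hi' => ?_
  rw [← List.getD_eq_getElem _ 0 hi, getD_toList, ofList_parts, List.getD_eq_getElem _ _ hi']

noncomputable def distinctPartsEquivFinset :
    {lam : IntPartition // lam.DistinctParts} ≃ {S : Finset ℕ // 0 ∉ S} where
  toFun lam := ⟨lam.1.toList.toFinset, by simpa using zero_notMem_toList⟩
  invFun S := ⟨ofList (S.1.sort (· ≥ ·)) (Finset.sortedGT_sort _), distinctParts_ofList _⟩
  left_inv lam := by
    have hsorted := lam.2.sortedGT_toList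
    ext i
    rw [ofList_parts, (List.toFinset_sort _ hsorted.nodup).2 hsorted.sortedGE.pairwise,
      getD_toList]
  right_inv S := by
    ext1
    change (ofList (S.1.sort (· ≥ ·)) (Finset.sortedGT_sort _)).toList.toFinset = S.1
    rw [toList_ofList _ (by simpa using S.2), Finset.sort_toFinset]

theorem forall_mem_toList_add_conjParts_zero_le_iff {t : ℕ} :
    (∀ x ∈ lam.toList, x + lam.conjParts 0 ≤ t) ↔ lam.parts 0 + lam.conjParts 0 ≤ t := by
  simp only [toList, List.mem_map, List.mem_range, forall_exists_index, and_imp,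
    forall_apply_eq_imp_iff₂]
  refine ⟨fun h => ?_, fun h i _ =>
    (Nat.add_le_add_right (lam.antitone 0 i i.zero_le) _).trans h⟩
  rcases Nat.eq_zero_or_pos (lam.conjParts 0) with h0 | h0
  · have := lam.conjParts_le_iff.1 h0.le
    omega
  · exact h 0 h0

theorem forall_mem_distinctPartsEquivFinset_add_card_le_iff
    (lam : {lam : IntPartition // lam.DistinctParts}) {t : ℕ} :
    (∀ x ∈ (distinctPartsEquivFinset lam).1,
        x + (distinctPartsEquivFinset lam).1.card ≤ t) ↔
      lam.1.parts 0 + lam.1.conjParts 0 ≤ t := by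
  change (∀ x ∈ lam.1.toList.toFinset, x + lam.1.toList.toFinset.card ≤ t) ↔ _
  simp only [List.mem_toFinset, List.toFinset_card_of_nodup lam.2.sortedGT_toList.nodup,
    length_toList]
  exact forall_mem_toList_add_conjParts_zero_le_iff

end IntPartition

theorem card_core_distinct_eq_fib_general (t : ℕ) :
    Nat.card {lam : IntPartition //
      lam.IsCore t ∧ lam.IsCore (t + 1) ∧ lam.DistinctParts} = Nat.fib (t + 1) := by
  rw [← Finset.card_pos_add_card_le_eq_fib t]
  refine Nat.card_congr ?_
  calc {lam : IntPartition // lam.IsCore t ∧ lam.IsCore (t + 1) ∧ lam.DistinctParts}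
      ≃ {lam : {lam : IntPartition // lam.DistinctParts} //
          lam.1.parts 0 + lam.1.conjParts 0 ≤ t} :=
        ((Equiv.subtypeSubtypeEquivSubtypeInter IntPartition.DistinctParts
            fun lam => lam.parts 0 + lam.conjParts 0 ≤ t).trans
          (Equiv.subtypeEquivRight fun lam => ?_)).symm
    _ ≃ {S : {S : Finset ℕ // 0 ∉ S} // ∀ x ∈ S.1, x + S.1.card ≤ t} :=
        IntPartition.distinctPartsEquivFinset.subtypeEquiv fun lam => ?_
    _ ≃ {S : Finset ℕ // 0 ∉ S ∧ ∀ x ∈ S, x + S.card ≤ t} :=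
        Equiv.subtypeSubtypeEquivSubtypeInter (fun S : Finset ℕ => 0 ∉ S)
          fun S => ∀ x ∈ S, x + S.card ≤ t
  · exact (and_congr_right fun hd => (hd.isCore_and_isCore_succ_iff t).symm).trans
      (and_comm.trans and_assoc)
  · exact (IntPartition.forall_mem_distinctPartsEquivFinset_add_card_le_iff lam).symm

/-- The number of `(t, t+1)`-core partitions with distinct parts equals the
Fibonacci number `F_{t+1}` (with `F_1 = F_2 = 1`). -/
theorem card_core_distinct_eq_fib (t : ℕ) (ht : 1 ≤ t) :
    Nat.card {lam : IntPartition //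
      lam.IsCore t ∧ lam.IsCore (t + 1) ∧ lam.DistinctParts} = Nat.fib (t + 1) :=
  card_core_distinct_eq_fib_general t
end

section
/- Let t ≥ 1 and let λ be a self-conjugate (t, t+1)-core partition whose first s(λ) parts are pairwise distinct, where s(λ) is the Durfee square size. Then every main diagonal hook length h of λ satisfies h ≤ 2t − 1. -/
/-!
Conjugation turns the diagonal hook of a self-conjugate partition into `2 (λᵢ - i) - 1`, so it
suffices to show `λ₀ ≤ t`. Suppose `λ₀ > t`. Along the first row the hook lengths decrease
strictly, from `2λ₀ - 1 > t` down to `1` (the distinct Durfee parts force `λ₁ < λ₀`). Since they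
avoid `t` and `t + 1`, two consecutive ones differ by at least `3`, so the corresponding columns
`j` and `j + 1` differ in length by at least `2`. Then two consecutive rows `k`, `k + 1` both have
length `j + 1 > k`, which contradicts the distinctness of the Durfee parts, or self-conjugacy
when `k = j`.
-/

theorem IsLowerSet.mem_iff_lt_natCard {s : Set ℕ} (hl : IsLowerSet s) (hs : s.Finite) (k : ℕ) :
    k ∈ s ↔ k < Nat.card s := by
  obtain rfl | ⟨a, rfl⟩ := hl.eq_univ_or_Iio
  · exact absurd hs Set.infinite_univ
  · simp

theorem Nat.exists_lt_and_not_succ {p : ℕ → Prop} {n : ℕ} (h0 : p 0) (hn : ¬ p n) :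
    ∃ j < n, p j ∧ ¬ p (j + 1) := by
  induction n with
  | zero => exact absurd h0 hn
  | succ n ih =>
    by_cases hpn : p n
    · exact ⟨n, n.lt_succ_self, hpn, hn⟩
    · obtain ⟨j, hj, hpj⟩ := ih hpn
      exact ⟨j, hj.trans n.lt_succ_self, hpj⟩

namespace IntPartition

variable (lam : IntPartition)

def DistinctDurfeeParts : Prop :=
  ∀ i j, i < lam.durfee → j < lam.durfee → i ≠ j → lam.parts i ≠ lam.parts j

theorem finite_setOf_parts_ne_zero : {i | lam.parts i ≠ 0}.Finite := by
  obtain ⟨N, hN⟩ := lam.finite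
  exact (Set.finite_Iio N).subset fun i hi => by
    by_contra hiN
    exact hi (hN i (not_lt.1 hiN))

theorem lt_parts_iff_lt_conjParts (j k : ℕ) : j < lam.parts k ↔ k < lam.conjParts j :=
  IsLowerSet.mem_iff_lt_natCard (fun _ _ hab hb => lt_of_lt_of_le hb (lam.antitone _ _ hab))
    (lam.finite_setOf_parts_ne_zero.subset fun _ hi => Nat.ne_zero_of_lt hi) k

theorem lt_parts_iff_lt_durfee (i : ℕ) : i < lam.parts i ↔ i < lam.durfee :=
  IsLowerSet.mem_iff_lt_natCard
    (fun a b hba ha => lt_of_le_of_lt hba (lt_of_lt_of_le ha (lam.antitone b a hba)))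
    (lam.finite_setOf_parts_ne_zero.subset fun _ hi => Nat.ne_zero_of_lt hi) i

variable {lam}

theorem conjParts_eq_one {j : ℕ} (h1 : lam.parts 1 ≤ j) (h0 : j < lam.parts 0) :
    lam.conjParts j = 1 := by
  have hpos := (lam.lt_parts_iff_lt_conjParts j 0).1 h0
  have hle := (lam.lt_parts_iff_lt_conjParts j 1).not.1 (not_lt.2 h1)
  omega

theorem parts_conjParts_succ_eq {j : ℕ} (h : lam.conjParts (j + 1) + 2 ≤ lam.conjParts j) :
    lam.parts (lam.conjParts (j + 1)) = j + 1 ∧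
      lam.parts (lam.conjParts (j + 1) + 1) = j + 1 := by
  set k := lam.conjParts (j + 1)
  have hk : lam.parts k ≤ j + 1 :=
    not_lt.1 ((lam.lt_parts_iff_lt_conjParts (j + 1) k).not.2 (lt_irrefl k))
  have hk1 : j < lam.parts (k + 1) := (lam.lt_parts_iff_lt_conjParts j (k + 1)).2 (by omega)
  have := lam.antitone k (k + 1) k.le_succ
  omega

theorem hook_self (hsc : lam.IsSelfConjugate) (i : ℕ) :
    lam.hook i i = 2 * (lam.parts i - i) - 1 := by
  rw [hook, hsc i]
  omega

theorem IsCore.hook_ne {t i j : ℕ} (hc : lam.IsCore t) (hij : lam.IsCell i j) :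
    lam.hook i j ≠ t :=
  fun h => hc i j hij (h ▸ dvd_refl t)

theorem parts_succ_ne (hsc : lam.IsSelfConjugate) (hdist : lam.DistinctDurfeeParts) {k : ℕ}
    (hk : k < lam.parts k) : lam.parts (k + 1) ≠ lam.parts k := by
  intro heq
  by_cases hk1 : k + 1 < lam.parts (k + 1)
  · exact hdist (k + 1) k ((lam.lt_parts_iff_lt_durfee _).1 hk1)
      ((lam.lt_parts_iff_lt_durfee _).1 hk) k.succ_ne_self heq
  · have := (lam.lt_parts_iff_lt_conjParts k (k + 1)).1 (by omega)
    rw [hsc k] at this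
    omega

theorem parts_zero_le_of_inDS {t : ℕ} (ht : 1 ≤ t) (hlam : lam.InDS t) : lam.parts 0 ≤ t := by
  obtain ⟨hsc, hct, hct1, hdist⟩ := hlam
  by_contra! hp0
  have hook_zero : ∀ j, lam.hook 0 j = lam.parts 0 - j + lam.conjParts j - 1 := fun j => rfl
  have hstart : t < lam.hook 0 0 := by
    rw [hook_zero, hsc 0]
    omega
  have hend : ¬ t < lam.hook 0 (lam.parts 0 - 1) := by
    have h10 : lam.parts 1 < lam.parts 0 :=
      lt_of_le_of_ne (lam.antitone 0 1 zero_le_one) (parts_succ_ne hsc hdist (by omega))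
    rw [hook_zero, conjParts_eq_one (by omega) (by omega)]
    omega
  obtain ⟨j, hj, hjt, hj1t⟩ :=
    Nat.exists_lt_and_not_succ (p := fun j => t < lam.hook 0 j) hstart hend
  have hcell : lam.IsCell 0 (j + 1) := by unfold IsCell; omega
  have hj_ne := hct1.hook_ne (lt_trans j.lt_succ_self hcell)
  have hj1_ne := hct.hook_ne hcell
  have hpos := (lam.lt_parts_iff_lt_conjParts (j + 1) 0).1 hcell
  rw [hook_zero] at hjt hj1t hj_ne hj1_ne
  -- avoiding `t` and `t + 1`, the hooks drop by at least `3` from column `j` to `j + 1`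
  have hjump : lam.conjParts (j + 1) + 2 ≤ lam.conjParts j := by omega
  have hshort : lam.conjParts (j + 1) < j + 1 := by omega
  obtain ⟨hk, hk1⟩ := parts_conjParts_succ_eq hjump
  exact parts_succ_ne hsc hdist (hk.symm ▸ hshort) (hk1.trans hk.symm)

end IntPartition

/-- If `lam ∈ DS(t)`, then every main diagonal hook length of `lam` is at most
`2t - 1`. -/
theorem md_le_of_inDS (t : ℕ) (ht : 1 ≤ t) (lam : IntPartition)
    (hlam : lam.InDS t) :
    ∀ h ∈ lam.MD, h ≤ 2 * t - 1 := by
  rintro _ ⟨i, -, rfl⟩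
  have hp0 := lam.parts_zero_le_of_inDS ht hlam
  have hpi := lam.antitone 0 i i.zero_le
  rw [lam.hook_self hlam.1]
  omega
end
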